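/- Let X be a compact Hausdorff space, Y a finite set (with the discrete topology/uniformity), T : X → Set Y a multifunction with nonempty values and open fibers T⁻¹(y), and Z a topological vector space with a map ι : Y → Z. Then there exist a continuous map f : X → Δₙ (where n+1 = |Y|, Y = {a₀,…,aₙ}) such that for all x ∈ X and all i with f(x)ᵢ ≠ 0 one has aᵢ ∈ T(x); consequently x ↦ Σᵢ f(x)ᵢ ι(aᵢ) is a continuous selection of convexHull(ι(T(x))). -/

import Mathlib

/-! The fibers `{x | y ∈ T x}` form a finite open cover of the normal space `X`, so it has a
subordinate partition of unity `(ρ_y)`. The point `(ρ_y x)_y` of the standard simplex depends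
continuously on `x`, and `ρ_y x ≠ 0` forces `x ∈ tsupport ρ_y ⊆ {x | y ∈ T x}`. A convex
combination whose nonzero weights sit on `T x` lies in the convex hull of `ι '' T x`. -/

open Set

namespace PartitionOfUnity

variable {ι X : Type*} [Fintype ι] [TopologicalSpace X]

def toStdSimplex (ρ : PartitionOfUnity ι X univ) : C(X, stdSimplex ℝ ι) where
  toFun x := ⟨fun i => ρ i x, fun i => ρ.nonneg i x,
    by rw [← finsum_eq_sum_of_fintype]; exact ρ.sum_eq_one (mem_univ x)⟩
  continuous_toFun := (continuous_pi fun i => (ρ i).continuous).subtype_mk _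

end PartitionOfUnity

theorem exists_continuous_stdSimplex_subordinate {X ι : Type*} [TopologicalSpace X]
    [NormalSpace X] [Fintype ι] (T : X → Set ι) (hne : ∀ x, (T x).Nonempty)
    (hfib : ∀ i, IsOpen {x | i ∈ T x}) :
    ∃ f : C(X, stdSimplex ℝ ι), ∀ x i, (f x : ι → ℝ) i ≠ 0 → i ∈ T x := by
  have hcover : univ ⊆ ⋃ i, {x | i ∈ T x} := fun x _ => mem_iUnion.2 (hne x)
  obtain ⟨ρ, hρ⟩ := PartitionOfUnity.exists_isSubordinate_of_locallyFinite isClosed_univ _ hfib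
    (locallyFinite_of_finite _) hcover
  exact ⟨ρ.toStdSimplex, fun x i hi => hρ i (subset_tsupport _ hi)⟩

theorem sum_smul_mem_convexHull_image_of_mem_stdSimplex {ι E : Type*} [Fintype ι]
    [AddCommGroup E] [Module ℝ E] {w : ι → ℝ} (hw : w ∈ stdSimplex ℝ ι) (z : ι → E)
    {s : Set ι} (hs : ∀ i, w i ≠ 0 → i ∈ s) :
    ∑ i, w i • z i ∈ convexHull ℝ (z '' s) := by
  rw [← finsum_eq_sum_of_fintype]
  exact (convex_convexHull ℝ _).finsum_mem hw.1 (by rw [finsum_eq_sum_of_fintype]; exact hw.2)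
    fun i hi => subset_convexHull ℝ _ (mem_image_of_mem z (hs i hi))

theorem browder_type_discrete_selection_general
    {X : Type*} [TopologicalSpace X] [CompactSpace X] [T2Space X]
    {Y : Type*} [Fintype Y]
    {Z : Type*} [AddCommGroup Z] [Module ℝ Z]
    (T : X → Set Y)
    (hne : ∀ x, (T x).Nonempty)
    (hfib : ∀ y : Y, IsOpen {x : X | y ∈ T x})
    (ι : Y → Z) :
    ∃ f : X → stdSimplex ℝ Y,
      Continuous f ∧
      (∀ (x : X) (i : Y), (f x : Y → ℝ) i ≠ 0 → i ∈ T x) ∧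
      (∀ x, (∑ i, (f x : Y → ℝ) i • ι i) ∈ convexHull ℝ (ι '' T x)) := by
  obtain ⟨f, hf⟩ := exists_continuous_stdSimplex_subordinate T hne hfib
  exact ⟨f, f.continuous, hf,
    fun x => sum_smul_mem_convexHull_image_of_mem_stdSimplex (f x).2 ι (hf x)⟩

/-- Browder-type selection for a finite discrete target: a multifunction with
nonempty values and open fibers into a finite set admits a continuous map into
the standard simplex supported on the values, giving a continuous selection of
the convex hull of the image under any map into a topological vector space. -/
theorem browder_type_discrete_selection
    {X : Type*} [TopologicalSpace X] [CompactSpace X] [T2Space X]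
    {Y : Type*} [Fintype Y]
    {Z : Type*} [AddCommGroup Z] [Module ℝ Z] [TopologicalSpace Z]
    [IsTopologicalAddGroup Z] [ContinuousSMul ℝ Z]
    (T : X → Set Y)
    (hne : ∀ x, (T x).Nonempty)
    (hfib : ∀ y : Y, IsOpen {x : X | y ∈ T x})
    (ι : Y → Z) :
    ∃ f : X → stdSimplex ℝ Y,
      Continuous f ∧
      (∀ (x : X) (i : Y), (f x : Y → ℝ) i ≠ 0 → i ∈ T x) ∧
      (∀ x, (∑ i, (f x : Y → ℝ) i • ι i) ∈ convexHull ℝ (ι '' T x)) :=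
  browder_type_discrete_selection_general T hne hfib ι
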